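/- Let K_1, K_2 ⊆ ℝ^d be ℝ-cones such that K_1 ∩ K_2 = {0}, and suppose there exists w ∈ ℝ^d such that ⟨u,w⟩ > 0 for all nonzero u ∈ K_1 ∪ K_2. Then the complexifications satisfy K_1^ℂ ∩ K_2^ℂ = {0}. -/

import Mathlib

open scoped BigOperators Pointwise

noncomputable section

/-- The Euclidean norm of a finitely-indexed vector (real or complex entries). -/
def vecEnorm {ι : Type*} [Fintype ι] {E : Type*} [Norm E] (u : ι → E) : ℝ :=
  Real.sqrt (∑ i, ‖u i‖ ^ 2)

/-- The operator norm of a real matrix induced by the Euclidean norm. -/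
def opNorm {ι : Type*} [Fintype ι] (A : Matrix ι ι ℝ) : ℝ :=
  sSup ((fun u : ι → ℝ => vecEnorm (A.mulVec u)) '' {u : ι → ℝ | vecEnorm u = 1})

/-- A multicone for a set of matrices (Definition 1.2). -/
def IsMulticone {ι : Type*} [Fintype ι] (S : Set (Matrix ι ι ℝ)) {m : ℕ}
    (K : Fin m → Set (ι → ℝ)) (w : ι → ℝ) : Prop :=
  (∀ j, IsClosed (K j)) ∧ (∀ j, Convex ℝ (K j)) ∧ (∀ j, (interior (K j)).Nonempty) ∧
  (∀ j, ∀ c : ℝ, 0 ≤ c → ∀ u ∈ K j, c • u ∈ K j) ∧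
  (∑ i, w i ^ 2 = 1) ∧
  (∀ u ∈ ⋃ j, K j, u ≠ 0 → 0 < ∑ i, u i * w i) ∧
  (∀ A ∈ S, ∀ j, ∃ ℓ, ∀ u ∈ K j, u ≠ 0 →
    A.mulVec u ∈ interior (K ℓ) ∨ -A.mulVec u ∈ interior (K ℓ)) ∧
  (∀ j₁ j₂, j₁ ≠ j₂ → K j₁ ∩ K j₂ = {0})

/-- The set of matrices is multipositive if it admits a multicone. -/
def IsMultipositive {ι : Type*} [Fintype ι] (S : Set (Matrix ι ι ℝ)) : Prop :=
  ∃ (m : ℕ) (_ : 0 < m) (K : Fin m → Set (ι → ℝ)) (w : ι → ℝ), IsMulticone S K w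

/-- The semigroup generated by a set of matrices. -/
def semigroupOf {ι : Type*} [Fintype ι] [DecidableEq ι] (S : Set (Matrix ι ι ℝ)) :
    Set (Matrix ι ι ℝ) :=
  {B | ∃ l : List (Matrix ι ι ℝ), l ≠ [] ∧ (∀ M ∈ l, M ∈ S) ∧ B = l.prod}

/-- The complexification of a set in ℝ^ι. -/
def complexify {ι : Type*} (K : Set (ι → ℝ)) : Set (ι → ℂ) :=
  {z | ∃ (c : ℂ) (u v : ι → ℝ), u ∈ K ∧ v ∈ K ∧
    z = fun i => c * (((u i : ℂ) + (v i : ℂ)) + Complex.I * ((u i : ℂ) - (v i : ℂ)))}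

/-- The action of a real matrix on complex vectors. -/
def mulVecC {ι : Type*} [Fintype ι] (A : Matrix ι ι ℝ) (z : ι → ℂ) : ι → ℂ :=
  (A.map (fun x : ℝ => (x : ℂ))).mulVec z

/-- An ℝ-cone: closed, convex, nonempty interior, positively homogeneous, proper. -/
def IsRCone {ι : Type*} [Fintype ι] (K : Set (ι → ℝ)) : Prop :=
  IsClosed K ∧ Convex ℝ K ∧ (interior K).Nonempty ∧
  (∀ c : ℝ, 0 < c → c • K = K) ∧ K ∩ (-K) = {0}

end

/-! Every element of a complexification is a complex multiple of some `u + i v` with `u, v` in the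
cone, so a common nonzero element yields `u₁ + i v₁ = (x + i y) (u₂ + i v₂)`. The functional
`⟨·, w⟩` sends both `u₁ + i v₁` and `u₂ + i v₂` to nonzero points of the closed first quadrant,
hence `x ≥ 0`; after complex conjugation we may also assume `y ≥ 0`. Then
`v₁ = x v₂ + y u₂ ∈ K₁ ∩ K₂` vanishes, and evaluating `⟨·, w⟩` on `u₁ = x u₂ - y v₂` shows that
`u₁` vanishes too. -/

namespace IsRCone

variable {ι : Type*} [Fintype ι] {K : Set (ι → ℝ)}

lemma zero_mem (h : IsRCone K) : (0 : ι → ℝ) ∈ K :=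
  (h.2.2.2.2.symm ▸ rfl : (0 : ι → ℝ) ∈ K ∩ -K).1

lemma smul_mem (h : IsRCone K) {c : ℝ} (hc : 0 ≤ c) {u : ι → ℝ} (hu : u ∈ K) : c • u ∈ K := by
  rcases hc.eq_or_lt with rfl | hc
  · simpa using h.zero_mem
  · exact h.2.2.2.1 c hc ▸ Set.smul_mem_smul_set hu

lemma add_mem (h : IsRCone K) {u v : ι → ℝ} (hu : u ∈ K) (hv : v ∈ K) : u + v ∈ K := by
  have hmid := h.2.1 hu hv (by norm_num : (0 : ℝ) ≤ 1 / 2) (by norm_num : (0 : ℝ) ≤ 1 / 2)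
    (by norm_num)
  convert h.smul_mem zero_le_two hmid using 1
  module

def toPointedCone (h : IsRCone K) : PointedCone ℝ (ι → ℝ) where
  carrier := K
  zero_mem' := h.zero_mem
  add_mem' := h.add_mem
  smul_mem' c _ hu := h.smul_mem c.2 hu

end IsRCone

namespace PointedCone

variable {E : Type*} [AddCommGroup E] [Module ℝ E] {C C₁ C₂ : PointedCone ℝ E} {f : E →ₗ[ℝ] ℝ}

lemma apply_nonneg (hf : ∀ u ∈ C, u ≠ 0 → 0 < f u) {u : E} (hu : u ∈ C) : 0 ≤ f u := by
  rcases eq_or_ne u 0 with rfl | hu0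
  · simp
  · exact (hf u hu hu0).le

lemma eq_zero_of_apply_nonpos (hf : ∀ u ∈ C, u ≠ 0 → 0 < f u) {u : E} (hu : u ∈ C)
    (hfu : f u ≤ 0) : u = 0 := by
  by_contra hu0
  exact (hf u hu hu0).not_ge hfu

lemma eq_zero_of_mem_of_mem (hdisj : C₁ ⊓ C₂ = ⊥) {u : E} (hu₁ : u ∈ C₁) (hu₂ : u ∈ C₂) :
    u = 0 := by
  have hu : u ∈ C₁ ⊓ C₂ := ⟨hu₁, hu₂⟩
  rwa [hdisj, Submodule.mem_bot] at hu

variable {u₁ v₁ u₂ v₂ : E} {x y : ℝ}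

lemma eq_zero_of_eq_rotation_of_nonneg (hdisj : C₁ ⊓ C₂ = ⊥)
    (hf₁ : ∀ u ∈ C₁, u ≠ 0 → 0 < f u) (hf₂ : ∀ u ∈ C₂, u ≠ 0 → 0 < f u)
    (hu₁ : u₁ ∈ C₁) (hv₁ : v₁ ∈ C₁) (hu₂ : u₂ ∈ C₂) (hv₂ : v₂ ∈ C₂) (hx : 0 ≤ x) (hy : 0 ≤ y)
    (hu : u₁ = x • u₂ - y • v₂) (hv : v₁ = x • v₂ + y • u₂) : u₁ = 0 ∧ v₁ = 0 := by
  have hv₁0 : v₁ = 0 :=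
    eq_zero_of_mem_of_mem hdisj hv₁ (hv ▸ C₂.add_mem (C₂.smul_mem hx hv₂) (C₂.smul_mem hy hu₂))
  refine ⟨?_, hv₁0⟩
  rcases hy.eq_or_lt with rfl | hy
  · rw [zero_smul, sub_zero] at hu
    exact eq_zero_of_mem_of_mem hdisj hu₁ (hu ▸ C₂.smul_mem hx hu₂)
  · have hfu₂ := apply_nonneg hf₂ hu₂
    have hfv₂ := apply_nonneg hf₂ hv₂
    have hfv₁ : x * f v₂ + y * f u₂ = 0 := by simpa [hv] using congrArg f hv₁0
    have hfu₂0 : f u₂ = 0 := by nlinarith [mul_nonneg hx hfv₂]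
    refine eq_zero_of_apply_nonpos hf₁ hu₁ ?_
    simp only [hu, map_sub, map_smul, smul_eq_mul, hfu₂0, mul_zero, zero_sub, neg_nonpos]
    exact mul_nonneg hy.le hfv₂

lemma re_nonneg_of_eq_rotation (hf₁ : ∀ u ∈ C₁, u ≠ 0 → 0 < f u)
    (hf₂ : ∀ u ∈ C₂, u ≠ 0 → 0 < f u) (hu₁ : u₁ ∈ C₁) (hv₁ : v₁ ∈ C₁) (hu₂ : u₂ ∈ C₂)
    (hv₂ : v₂ ∈ C₂) (huv₂ : u₂ ≠ 0 ∨ v₂ ≠ 0)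
    (hu : u₁ = x • u₂ - y • v₂) (hv : v₁ = x • v₂ + y • u₂) : 0 ≤ x := by
  have hfu₁ : f u₁ = x * f u₂ - y * f v₂ := by simp [hu]
  have hfv₁ : f v₁ = x * f v₂ + y * f u₂ := by simp [hv]
  have hpos : 0 < f u₂ + f v₂ := by
    rcases huv₂ with h | h
    · linarith [hf₂ u₂ hu₂ h, apply_nonneg hf₂ hv₂]
    · linarith [hf₂ v₂ hv₂ h, apply_nonneg hf₂ hu₂]
  -- `x` is the real part of the quotient `(f u₁ + i f v₁) / (f u₂ + i f v₂)`
  have hxnorm : x * (f u₂ ^ 2 + f v₂ ^ 2) = f u₁ * f u₂ + f v₁ * f v₂ := by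
    rw [hfu₁, hfv₁]; ring
  have hnorm : 0 < f u₂ ^ 2 + f v₂ ^ 2 := by nlinarith [sq_nonneg (f u₂ - f v₂)]
  refine nonneg_of_mul_nonneg_left (hxnorm ▸ add_nonneg ?_ ?_) hnorm
  · exact mul_nonneg (apply_nonneg hf₁ hu₁) (apply_nonneg hf₂ hu₂)
  · exact mul_nonneg (apply_nonneg hf₁ hv₁) (apply_nonneg hf₂ hv₂)

lemma eq_zero_of_eq_rotation (hdisj : C₁ ⊓ C₂ = ⊥)
    (hf₁ : ∀ u ∈ C₁, u ≠ 0 → 0 < f u) (hf₂ : ∀ u ∈ C₂, u ≠ 0 → 0 < f u)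
    (hu₁ : u₁ ∈ C₁) (hv₁ : v₁ ∈ C₁) (hu₂ : u₂ ∈ C₂) (hv₂ : v₂ ∈ C₂)
    (hu : u₁ = x • u₂ - y • v₂) (hv : v₁ = x • v₂ + y • u₂) : u₁ = 0 ∧ v₁ = 0 := by
  by_cases huv₂ : u₂ = 0 ∧ v₂ = 0
  · obtain ⟨rfl, rfl⟩ := huv₂
    simp [hu, hv]
  have hx := re_nonneg_of_eq_rotation hf₁ hf₂ hu₁ hv₁ hu₂ hv₂ (not_and_or.1 huv₂) hu hv
  rcases le_total 0 y with hy | hy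
  · exact eq_zero_of_eq_rotation_of_nonneg hdisj hf₁ hf₂ hu₁ hv₁ hu₂ hv₂ hx hy hu hv
  -- conjugating and multiplying by `i` swaps the real and imaginary parts and negates `y`
  · refine (eq_zero_of_eq_rotation_of_nonneg hdisj hf₁ hf₂ hv₁ hu₁ hv₂ hu₂ hx (neg_nonneg.2 hy)
      ?_ ?_).symm
    · rw [hv]; module
    · rw [hu]; module

end PointedCone

section Complexify

variable {ι : Type*}

def ofReIm (u v : ι → ℝ) : ι → ℂ := fun i => ⟨u i, v i⟩

@[simp]
lemma ofReIm_zero : ofReIm (0 : ι → ℝ) 0 = 0 := rfl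

lemma ofReIm_eq_smul_ofReIm_iff {u₁ v₁ u₂ v₂ : ι → ℝ} {μ : ℂ} :
    ofReIm u₁ v₁ = μ • ofReIm u₂ v₂ ↔
      u₁ = μ.re • u₂ - μ.im • v₂ ∧ v₁ = μ.re • v₂ + μ.im • u₂ := by
  simp only [funext_iff, Complex.ext_iff, ofReIm, Pi.smul_apply, smul_eq_mul, Complex.mul_re,
    Complex.mul_im, Pi.sub_apply, Pi.add_apply, forall_and]

lemma zero_mem_complexify {K : Set (ι → ℝ)} (hK : K.Nonempty) : 0 ∈ complexify K := by
  obtain ⟨u, hu⟩ := hK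
  exact ⟨0, u, u, hu, hu, by funext; simp⟩

lemma exists_eq_smul_ofReIm_of_mem_complexify {K : Set (ι → ℝ)} {z : ι → ℂ}
    (hz : z ∈ complexify K) : ∃ c : ℂ, ∃ u ∈ K, ∃ v ∈ K, z = c • ofReIm u v := by
  obtain ⟨c, u, v, hu, hv, rfl⟩ := hz
  -- `(u + v) + i (u - v) = (1 - i) (v + i u)`
  refine ⟨c * (1 - Complex.I), v, hv, u, hu, ?_⟩
  funext i
  apply Complex.ext <;> simp [ofReIm] <;> ring

end Complexify

/-- Lemma 3.9: complexifications of transversally disjoint ℝ-cones intersect only at 0. -/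
theorem stmt15 {d : ℕ} (K₁ K₂ : Set (Fin d → ℝ)) (h₁ : IsRCone K₁) (h₂ : IsRCone K₂)
    (hdisj : K₁ ∩ K₂ = {0}) (w : Fin d → ℝ)
    (hw : ∀ u ∈ K₁ ∪ K₂, u ≠ 0 → 0 < ∑ i, u i * w i) :
    complexify K₁ ∩ complexify K₂ = {0} := by
  let f := (dotProductBilin ℝ ℝ).flip w
  have hf₁ : ∀ u ∈ h₁.toPointedCone, u ≠ 0 → 0 < f u := fun u hu => hw u (Or.inl hu)
  have hf₂ : ∀ u ∈ h₂.toPointedCone, u ≠ 0 → 0 < f u := fun u hu => hw u (Or.inr hu)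
  have hdisj' : h₁.toPointedCone ⊓ h₂.toPointedCone = ⊥ := SetLike.coe_injective hdisj
  refine subset_antisymm ?_ (Set.singleton_subset_iff.2
    ⟨zero_mem_complexify ⟨0, h₁.zero_mem⟩, zero_mem_complexify ⟨0, h₂.zero_mem⟩⟩)
  rintro z ⟨hz₁, hz₂⟩
  obtain ⟨c₁, u₁, hu₁, v₁, hv₁, rfl⟩ := exists_eq_smul_ofReIm_of_mem_complexify hz₁
  obtain ⟨c₂, u₂, hu₂, v₂, hv₂, hz⟩ := exists_eq_smul_ofReIm_of_mem_complexify hz₂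
  rcases eq_or_ne c₁ 0 with rfl | hc₁
  · simp
  have hquot : ofReIm u₁ v₁ = (c₂ / c₁) • ofReIm u₂ v₂ := by
    rw [div_eq_inv_mul, mul_smul, ← hz, inv_smul_smul₀ hc₁]
  obtain ⟨hu, hv⟩ := ofReIm_eq_smul_ofReIm_iff.1 hquot
  obtain ⟨rfl, rfl⟩ := PointedCone.eq_zero_of_eq_rotation hdisj' hf₁ hf₂ hu₁ hv₁ hu₂ hv₂ hu hv
  simp
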